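/- Let p ≥ 1 and X : ℝ → L^p(Ω; E) (i.e., E[dist(X(t,·), x₀)^p] < ∞ for all t). Then X is θ-almost periodic in p-mean if and only if X is θ-almost periodic (in probability) and the family of random variables dist(X(t,·), x₀)^p, t ∈ ℝ, is uniformly integrable for some (equivalently any) x₀ ∈ E. -/

import Mathlib

open MeasureTheory Set Filter Topology

noncomputable section

def RelativelyDense (A : Set ℝ) : Prop :=
  ∃ l > 0, ∀ t : ℝ, ∃ a ∈ A, a ∈ Set.Icc t (t + l)

variable {Ω : Type*} [MeasurableSpace Ω] {E : Type*} [MetricSpace E]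

/-- The metric of convergence in probability on random variables. -/
def d0 (P : Measure Ω) (Y Z : Ω → E) : ℝ :=
  ∫ ω, min (dist (Y ω) (Z ω)) 1 ∂P

/-- `τ` is a `θ`-`ε`-almost period of the process `X`. -/
def IsThetaAlmostPeriod (P : Measure Ω) (θ : ℝ → Ω → Ω) (X : ℝ → Ω → E)
    (ε τ : ℝ) : Prop :=
  ∀ t : ℝ, d0 P (fun ω => X (t + τ) (θ (-τ) ω)) (X t) ≤ ε

/-- `θ`-almost periodicity (in probability): joint continuity in probability of
`(t,s) ↦ X (t+s, θ₋ₛ ·)` and relative density of the set of `θ`-`ε`-almost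
periods for every `ε > 0`. -/
def ThetaAlmostPeriodic (P : Measure Ω) (θ : ℝ → Ω → Ω) (X : ℝ → Ω → E) : Prop :=
  (∀ t s : ℝ, ∀ ε > 0, ∃ δ > 0, ∀ t' s' : ℝ, |t' - t| < δ → |s' - s| < δ →
      d0 P (fun ω => X (t' + s') (θ (-s') ω)) (fun ω => X (t + s) (θ (-s) ω)) ≤ ε) ∧
  (∀ ε > 0, RelativelyDense {τ : ℝ | IsThetaAlmostPeriod P θ X ε τ})

/-- The `p`-mean distance between random variables. -/
def dp (P : Measure Ω) (p : ℝ) (Y Z : Ω → E) : ℝ :=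
  (∫ ω, dist (Y ω) (Z ω) ^ p ∂P) ^ (1 / p)

/-- `θ`-almost periodicity in `p`-mean. -/
def ThetaAlmostPeriodicP (P : Measure Ω) (θ : ℝ → Ω → Ω) (p : ℝ)
    (X : ℝ → Ω → E) : Prop :=
  (∀ t s : ℝ, ∀ ε > 0, ∃ δ > 0, ∀ t' s' : ℝ, |t' - t| < δ → |s' - s| < δ →
      dp P p (fun ω => X (t' + s') (θ (-s') ω)) (fun ω => X (t + s) (θ (-s) ω)) ≤ ε) ∧
  (∀ ε > 0, RelativelyDense {τ : ℝ |
      ∀ t : ℝ, dp P p (fun ω => X (t + τ) (θ (-τ) ω)) (X t) ≤ ε})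

open ProbabilityTheory

/-! On the random variables with the law of some `X u` (a class containing every
`X (t + s) ∘ θ₋ₛ`, as `θ` preserves `P`) the two distances are uniformly comparable: `d0 ≤ dp` by
Jensen, and once the tails `∫_{C ≤ dist(Y, x₀)} dist(Y, x₀)^p` are uniformly small, `d0`-closeness
forces `dp`-closeness (quantitative Vitali). Either kind of almost periodicity therefore transfers
to the other.

Uniform integrability follows from almost periodicity in `p`-mean: the tails of `X s`, `s ∈ [0, l]`,
are uniformly small by `dp`-continuity and compactness, and an almost period `τ ∈ [t - l, t]`
bounds the tail of `X t` (unchanged by `θ`) by that of `X (t - τ)` plus `2^p dp^p`. -/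

section RealInequalities

variable {p : ℝ}

theorem add_rpow_le_two_rpow_mul {a b : ℝ} (hp : 0 ≤ p) (ha : 0 ≤ a) (hb : 0 ≤ b) :
    (a + b) ^ p ≤ 2 ^ p * (a ^ p + b ^ p) := by
  have hmax : (max a b) ^ p ≤ a ^ p + b ^ p := by
    rcases max_choice a b with h | h <;> rw [h]
    · linarith [Real.rpow_nonneg hb p]
    · linarith [Real.rpow_nonneg ha p]
  calc (a + b) ^ p ≤ (2 * max a b) ^ p := by
        gcongr; linarith [le_max_left a b, le_max_right a b]
    _ = 2 ^ p * (max a b) ^ p := Real.mul_rpow zero_le_two (ha.trans (le_max_left a b))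
    _ ≤ 2 ^ p * (a ^ p + b ^ p) := by gcongr

theorem rpow_le_indicator_add_rpow {x C : ℝ} (hp : 0 ≤ p) (hx : 0 ≤ x) (hC : 0 ≤ C) :
    x ^ p ≤ (Ici C).indicator (· ^ p) x + C ^ p := by
  by_cases hCx : C ≤ x
  · simp only [indicator_of_mem (mem_Ici.2 hCx)]
    linarith [Real.rpow_nonneg hC p]
  · simpa [hCx] using Real.rpow_le_rpow hx (le_of_not_ge hCx) hp

theorem rpow_le_two_rpow_mul_add_indicator {a b c B : ℝ} (hp : 0 ≤ p) (hb : 0 ≤ b) (hc : 0 ≤ c)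
    (hB : 0 ≤ B) (habc : a ≤ b + c) (ha : 2 * B ≤ a) :
    a ^ p ≤ 2 ^ p * (b ^ p + (Ici B).indicator (· ^ p) c) := by
  have ha0 : 0 ≤ a := by linarith
  by_cases hBc : B ≤ c
  · rw [indicator_of_mem (mem_Ici.2 hBc)]
    exact (Real.rpow_le_rpow ha0 habc hp).trans (add_rpow_le_two_rpow_mul hp hb hc)
  · -- below the threshold `c < B ≤ a / 2`, so `b` carries at least half of `a`
    rw [indicator_of_notMem (by simpa using hBc), add_zero, ← Real.mul_rpow zero_le_two hb]
    exact Real.rpow_le_rpow ha0 (by linarith) hp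

theorem rpow_le_rpow_add_tail_add_min_div {D a c δ C : ℝ} (hp : 0 ≤ p) (hD : 0 ≤ D) (ha : 0 ≤ a)
    (hc : 0 ≤ c) (hDac : D ≤ a + c) (hδ : 0 < δ) (hδ1 : δ ≤ 1) (hC : 0 ≤ C) :
    D ^ p ≤ δ ^ p + 2 ^ p * ((Ici C).indicator (· ^ p) a + (Ici C).indicator (· ^ p) c)
      + 2 ^ p * (2 * C ^ p) * (min D 1 / δ) := by
  have hind : ∀ x, 0 ≤ (Ici C).indicator (· ^ p) x :=
    indicator_nonneg fun x hx => Real.rpow_nonneg (hC.trans hx) p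
  have h2p : (0 : ℝ) ≤ 2 ^ p := by positivity
  have hK : 0 ≤ 2 ^ p * (2 * C ^ p) := by positivity
  rcases lt_or_ge D δ with hDδ | hδD
  · have hDp : D ^ p ≤ δ ^ p := Real.rpow_le_rpow hD hDδ.le hp
    have hmin : 0 ≤ min D 1 / δ := by positivity
    nlinarith [hind a, hind c]
  · -- now `min D 1 / δ ≥ 1`, which pays for the two `C ^ p` left over by the tails
    have hmin : 2 ^ p * (2 * C ^ p) ≤ 2 ^ p * (2 * C ^ p) * (min D 1 / δ) :=
      le_mul_of_one_le_right hK (by rw [le_div_iff₀ hδ, one_mul]; exact le_min hδD hδ1)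
    have hsplit := add_le_add (rpow_le_indicator_add_rpow hp ha hC)
      (rpow_le_indicator_add_rpow hp hc hC)
    have hDp := (Real.rpow_le_rpow hD hDac hp).trans (add_rpow_le_two_rpow_mul hp ha hc)
    nlinarith [Real.rpow_nonneg hδ.le p]

end RealInequalities

def tailIntegral (μ : Measure Ω) (p : ℝ) (g : Ω → ℝ) (C : ℝ) : ℝ :=
  ∫ ω in {ω | C ≤ g ω}, g ω ^ p ∂μ

section TailIntegral

variable {μ : Measure Ω} {p : ℝ}

theorem tailIntegral_eq_setIntegral_map {g : Ω → ℝ} (hg : AEMeasurable g μ) (C : ℝ) :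
    tailIntegral μ p g C = ∫ x in Ici C, x ^ p ∂μ.map g :=
  (setIntegral_map (g := g) (f := fun x : ℝ => x ^ p) measurableSet_Ici
    (measurable_id.pow_const p).aestronglyMeasurable hg).symm

theorem ProbabilityTheory.IdentDistrib.tailIntegral_eq {ν : Measure Ω} {f g : Ω → ℝ}
    (h : IdentDistrib f g μ ν) (C : ℝ) : tailIntegral μ p f C = tailIntegral ν p g C := by
  rw [tailIntegral_eq_setIntegral_map h.aemeasurable_fst,
    tailIntegral_eq_setIntegral_map h.aemeasurable_snd, h.map_eq]

theorem tailIntegral_eq_integral_indicator {g : Ω → ℝ} (hg : Measurable g) (C : ℝ) :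
    tailIntegral μ p g C = ∫ ω, {ω | C ≤ g ω}.indicator (fun ω => g ω ^ p) ω ∂μ :=
  (integral_indicator (measurableSet_le measurable_const hg)).symm

theorem antitone_tailIntegral {g : Ω → ℝ} (hg0 : 0 ≤ g) (hgI : Integrable (fun ω => g ω ^ p) μ) :
    Antitone (tailIntegral μ p g) := fun _ _ hCC' =>
  setIntegral_mono_set hgI.integrableOn
    (Eventually.of_forall fun ω => Real.rpow_nonneg (hg0 ω) p)
    (Eventually.of_forall fun _ hω => hCC'.trans hω)

theorem tendsto_tailIntegral_atTop {g : Ω → ℝ} (hg : Measurable g)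
    (hgI : Integrable (fun ω => g ω ^ p) μ) : Tendsto (tailIntegral μ p g) atTop (𝓝 0) := by
  simp_rw [funext (tailIntegral_eq_integral_indicator (μ := μ) (p := p) hg)]
  rw [← integral_zero Ω ℝ (μ := μ)]
  refine tendsto_integral_filter_of_dominated_convergence (fun ω => ‖g ω ^ p‖)
    (Eventually.of_forall fun C => (hgI.indicator (measurableSet_le measurable_const hg)).1)
    (Eventually.of_forall fun C => Eventually.of_forall fun ω => norm_indicator_le_norm_self _ _)
    hgI.norm (Eventually.of_forall fun ω => tendsto_const_nhds.congr' ?_)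
  filter_upwards [eventually_gt_atTop (g ω)] with C hC
  simp [not_le.2 hC]

end TailIntegral

section Distances

variable {μ : Measure Ω} {p : ℝ} {Y Z : Ω → E}

theorem dp_le_iff (hp : 0 < p) {ε : ℝ} (hε : 0 ≤ ε) :
    dp μ p Y Z ≤ ε ↔ ∫ ω, dist (Y ω) (Z ω) ^ p ∂μ ≤ ε ^ p := by
  rw [dp, one_div]
  exact Real.rpow_inv_le_iff_of_pos (integral_nonneg fun _ => by positivity) hε hp

theorem dp_le_rpow_inv_iff (hp : 0 < p) {r : ℝ} (hr : 0 ≤ r) :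
    dp μ p Y Z ≤ r ^ p⁻¹ ↔ ∫ ω, dist (Y ω) (Z ω) ^ p ∂μ ≤ r := by
  rw [dp_le_iff hp (by positivity), Real.rpow_inv_rpow hr hp.ne']

theorem integrable_min_dist_one [IsFiniteMeasure μ]
    (hD : AEMeasurable (fun ω => dist (Y ω) (Z ω)) μ) :
    Integrable (fun ω => min (dist (Y ω) (Z ω)) 1) μ := by
  refine Integrable.of_bound (hD.min aemeasurable_const).aestronglyMeasurable 1
    (Eventually.of_forall fun ω => ?_)
  rw [Real.norm_of_nonneg (le_min dist_nonneg zero_le_one)]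
  exact min_le_right _ _

theorem d0_le_dp [IsProbabilityMeasure μ] (hp : 1 ≤ p)
    (hD : AEMeasurable (fun ω => dist (Y ω) (Z ω)) μ)
    (hI : Integrable (fun ω => dist (Y ω) (Z ω) ^ p) μ) : d0 μ Y Z ≤ dp μ p Y Z := by
  set m : Ω → ℝ := fun ω => min (dist (Y ω) (Z ω)) 1
  have hm0 : ∀ ω, 0 ≤ m ω := fun ω => le_min dist_nonneg zero_le_one
  have hmI : Integrable m μ := integrable_min_dist_one hD
  have hmpI : Integrable (fun ω => m ω ^ p) μ :=
    hI.mono' (hmI.1.aemeasurable.pow_const p).aestronglyMeasurable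
      (Eventually.of_forall fun ω => by
        rw [Real.norm_of_nonneg (by positivity)]
        exact Real.rpow_le_rpow (hm0 ω) (min_le_left _ _) (by linarith))
  have jensen : (∫ ω, m ω ∂μ) ^ p ≤ ∫ ω, m ω ^ p ∂μ :=
    (convexOn_rpow hp).map_integral_le (Real.continuous_rpow_const (by linarith)).continuousOn
      isClosed_Ici (Eventually.of_forall hm0) hmI hmpI
  rw [d0, dp, one_div, Real.le_rpow_inv_iff_of_pos (integral_nonneg hm0)
    (integral_nonneg fun _ => by positivity) (by linarith)]
  refine jensen.trans (integral_mono hmpI hI fun ω => ?_)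
  exact Real.rpow_le_rpow (hm0 ω) (min_le_left _ _) (by linarith)

end Distances

section Estimates

variable [MeasurableSpace E] [OpensMeasurableSpace E] [SecondCountableTopology E]
  {μ : Measure Ω} {p : ℝ} {Y Z : Ω → E}

theorem integrable_dist_rpow (hp : 0 ≤ p) (x₀ : E) (hY : Measurable Y) (hZ : Measurable Z)
    (hYI : Integrable (fun ω => dist (Y ω) x₀ ^ p) μ)
    (hZI : Integrable (fun ω => dist (Z ω) x₀ ^ p) μ) :
    Integrable (fun ω => dist (Y ω) (Z ω) ^ p) μ := by
  refine ((hYI.add hZI).const_mul (2 ^ p)).mono'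
    ((hY.dist hZ).pow_const p).aestronglyMeasurable (Eventually.of_forall fun ω => ?_)
  rw [Real.norm_of_nonneg (by positivity)]
  exact (Real.rpow_le_rpow dist_nonneg (dist_triangle_right _ _ _) hp).trans
    (add_rpow_le_two_rpow_mul hp dist_nonneg dist_nonneg)

theorem tailIntegral_dist_le (hp : 0 ≤ p) (x₀ : E) (hY : Measurable Y) (hZ : Measurable Z)
    (hYZ : Integrable (fun ω => dist (Y ω) (Z ω) ^ p) μ)
    (hZI : Integrable (fun ω => dist (Z ω) x₀ ^ p) μ) {B : ℝ} (hB : 0 ≤ B) :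
    tailIntegral μ p (fun ω => dist (Y ω) x₀) (2 * B) ≤
      2 ^ p * (∫ ω, dist (Y ω) (Z ω) ^ p ∂μ + tailIntegral μ p (fun ω => dist (Z ω) x₀) B) := by
  have hZx : Measurable fun ω => dist (Z ω) x₀ := hZ.dist measurable_const
  have hZtail := hZI.indicator (measurableSet_le (measurable_const (a := B)) hZx)
  rw [tailIntegral_eq_integral_indicator (hY.dist measurable_const),
    tailIntegral_eq_integral_indicator hZx, ← integral_add hYZ hZtail, ← integral_const_mul]
  refine integral_mono_of_nonneg (Eventually.of_forall fun ω => ?_)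
    ((hYZ.add hZtail).const_mul _) (Eventually.of_forall fun ω => ?_)
  · exact indicator_nonneg (fun ω _ => by positivity) ω
  · by_cases h : 2 * B ≤ dist (Y ω) x₀
    · rw [indicator_of_mem (show ω ∈ {ω | 2 * B ≤ dist (Y ω) x₀} from h)]
      exact rpow_le_two_rpow_mul_add_indicator hp dist_nonneg dist_nonneg hB
        (dist_triangle _ _ _) h
    · rw [indicator_of_notMem (show ω ∉ {ω | 2 * B ≤ dist (Y ω) x₀} from h)]
      exact mul_nonneg (by positivity) (add_nonneg (by positivity)
        (indicator_nonneg (fun ω _ => by positivity) ω))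

theorem integral_dist_rpow_le_tail_add_d0 [IsProbabilityMeasure μ] (hp : 0 ≤ p) (x₀ : E)
    (hY : Measurable Y) (hZ : Measurable Z) (hYI : Integrable (fun ω => dist (Y ω) x₀ ^ p) μ)
    (hZI : Integrable (fun ω => dist (Z ω) x₀ ^ p) μ) {δ C : ℝ} (hδ : 0 < δ) (hδ1 : δ ≤ 1)
    (hC : 0 ≤ C) :
    ∫ ω, dist (Y ω) (Z ω) ^ p ∂μ ≤ δ ^ p
      + 2 ^ p * (tailIntegral μ p (fun ω => dist (Y ω) x₀) C
        + tailIntegral μ p (fun ω => dist (Z ω) x₀) C)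
      + 2 ^ p * (2 * C ^ p) * (d0 μ Y Z / δ) := by
  have hYx : Measurable fun ω => dist (Y ω) x₀ := hY.dist measurable_const
  have hZx : Measurable fun ω => dist (Z ω) x₀ := hZ.dist measurable_const
  have hYt := hYI.indicator (measurableSet_le (measurable_const (a := C)) hYx)
  have hZt := hZI.indicator (measurableSet_le (measurable_const (a := C)) hZx)
  set tY := {ω | C ≤ dist (Y ω) x₀}.indicator (fun ω => dist (Y ω) x₀ ^ p)
  set tZ := {ω | C ≤ dist (Z ω) x₀}.indicator (fun ω => dist (Z ω) x₀ ^ p)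
  set K := 2 ^ p * (2 * C ^ p)
  have hT : Integrable (fun ω => 2 ^ p * (tY ω + tZ ω)) μ := (hYt.add hZt).const_mul _
  have hM : Integrable (fun ω => K * (min (dist (Y ω) (Z ω)) 1 / δ)) μ :=
    ((integrable_min_dist_one (hY.dist hZ).aemeasurable).div_const δ).const_mul K
  have hF : Integrable (fun ω => δ ^ p + 2 ^ p * (tY ω + tZ ω)) μ := (integrable_const _).add hT
  calc ∫ ω, dist (Y ω) (Z ω) ^ p ∂μ
      ≤ ∫ ω, (δ ^ p + 2 ^ p * (tY ω + tZ ω) + K * (min (dist (Y ω) (Z ω)) 1 / δ)) ∂μ :=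
        integral_mono_of_nonneg (Eventually.of_forall fun ω => by positivity) (hF.add hM)
          (Eventually.of_forall fun ω => rpow_le_rpow_add_tail_add_min_div hp dist_nonneg
            dist_nonneg dist_nonneg (dist_triangle_right (Y ω) (Z ω) x₀) hδ hδ1 hC)
    _ = _ := by
        rw [integral_add hF hM, integral_add (integrable_const _) hT, integral_const_mul,
          integral_const_mul, integral_add hYt hZt, integral_div,
          ← tailIntegral_eq_integral_indicator hYx, ← tailIntegral_eq_integral_indicator hZx]
        simp [d0]

end Estimates

section UniformTails

variable [MeasurableSpace E] [OpensMeasurableSpace E] [SecondCountableTopology E]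
  {μ : Measure Ω} {p : ℝ}

theorem exists_d0_le_imp_dp_le [IsProbabilityMeasure μ] (hp : 0 < p) (x₀ : E) {S : Set (Ω → E)}
    (hSm : ∀ Y ∈ S, Measurable Y) (hSI : ∀ Y ∈ S, Integrable (fun ω => dist (Y ω) x₀ ^ p) μ)
    (hS : ∀ η > 0, ∃ C, ∀ Y ∈ S, tailIntegral μ p (fun ω => dist (Y ω) x₀) C ≤ η)
    {ε : ℝ} (hε : 0 < ε) : ∃ κ > 0, ∀ Y ∈ S, ∀ Z ∈ S, d0 μ Y Z ≤ κ → dp μ p Y Z ≤ ε := by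
  set e := ε ^ p
  have he : 0 < e := by positivity
  set δ := min 1 ((e / 3) ^ p⁻¹)
  have hδ : 0 < δ := by positivity
  have hδp : δ ^ p ≤ e / 3 := (Real.rpow_le_rpow hδ.le (min_le_right _ _) hp.le).trans_eq
    (Real.rpow_inv_rpow (by positivity) hp.ne')
  obtain ⟨C₀, hC₀⟩ := hS (e / (6 * 2 ^ p)) (by positivity)
  set C := max C₀ 0
  have hC : ∀ Y ∈ S, tailIntegral μ p (fun ω => dist (Y ω) x₀) C ≤ e / (6 * 2 ^ p) :=
    fun Y hY => (antitone_tailIntegral (fun _ => dist_nonneg) (hSI Y hY)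
      (le_max_left _ _)).trans (hC₀ Y hY)
  set K := 2 ^ p * (2 * C ^ p)
  have hK : 0 ≤ K := by positivity
  refine ⟨e * δ / (3 * (K + 1)), by positivity, fun Y hY Z hZ hYZ => ?_⟩
  rw [dp_le_iff hp hε.le]
  refine (integral_dist_rpow_le_tail_add_d0 hp.le x₀ (hSm Y hY) (hSm Z hZ) (hSI Y hY) (hSI Z hZ)
    hδ (min_le_left _ _) (le_max_right C₀ 0)).trans ?_
  have htails : 2 ^ p * (tailIntegral μ p (fun ω => dist (Y ω) x₀) C
      + tailIntegral μ p (fun ω => dist (Z ω) x₀) C) ≤ e / 3 :=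
    calc _ ≤ 2 ^ p * (e / (6 * 2 ^ p) + e / (6 * 2 ^ p)) := by gcongr <;> exact hC _ ‹_›
      _ = e / 3 := by field_simp; ring
  have hd0 : K * (d0 μ Y Z / δ) ≤ e / 3 :=
    calc K * (d0 μ Y Z / δ) ≤ K * (e * δ / (3 * (K + 1)) / δ) := by gcongr
      _ = e / 3 * (K / (K + 1)) := by field_simp
      _ ≤ e / 3 := mul_le_of_le_one_right (by positivity)
        ((div_le_one (by positivity)).2 (by linarith))
  linarith

theorem eventually_forall_tailIntegral_le {T : Type*} [TopologicalSpace T] {Y : T → Ω → E}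
    {K : Set T} (hK : IsCompact K) (hp : 0 ≤ p) (x₀ : E) (hYm : ∀ s, Measurable (Y s))
    (hYI : ∀ s, Integrable (fun ω => dist (Y s ω) x₀ ^ p) μ)
    (hcont : ∀ s₀ ∈ K, Tendsto (fun s => ∫ ω, dist (Y s ω) (Y s₀ ω) ^ p ∂μ) (𝓝 s₀) (𝓝 0))
    {η : ℝ} (hη : 0 < η) :
    ∀ᶠ C in atTop, ∀ s ∈ K, tailIntegral μ p (fun ω => dist (Y s ω) x₀) C ≤ η := by
  have hlocal : ∀ s₀ ∈ K, ∀ᶠ z : ℝ × T in atTop ×ˢ 𝓝 s₀,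
      tailIntegral μ p (fun ω => dist (Y z.2 ω) x₀) z.1 ≤ η := by
    intro s₀ hs₀
    have hbound : Tendsto (fun z : ℝ × T => 2 ^ p * (∫ ω, dist (Y z.2 ω) (Y s₀ ω) ^ p ∂μ
        + tailIntegral μ p (fun ω => dist (Y s₀ ω) x₀) (z.1 / 2))) (atTop ×ˢ 𝓝 s₀) (𝓝 0) := by
      simpa using (((hcont s₀ hs₀).comp tendsto_snd).add
        ((tendsto_tailIntegral_atTop ((hYm s₀).dist measurable_const) (hYI s₀)).comp
          ((tendsto_id.atTop_div_const two_pos).comp tendsto_fst))).const_mul (2 ^ p)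
    filter_upwards [hbound.eventually (eventually_le_nhds hη),
      tendsto_fst.eventually (eventually_ge_atTop 0)] with z hz hz0
    calc tailIntegral μ p (fun ω => dist (Y z.2 ω) x₀) z.1
        = tailIntegral μ p (fun ω => dist (Y z.2 ω) x₀) (2 * (z.1 / 2)) := by
          rw [mul_div_cancel₀ _ two_ne_zero]
      _ ≤ _ := tailIntegral_dist_le hp x₀ (hYm z.2) (hYm s₀)
          (integrable_dist_rpow hp x₀ (hYm _) (hYm _) (hYI _) (hYI _)) (hYI s₀) (by linarith)
      _ ≤ η := hz
  have hK' : ∀ᶠ z : ℝ × T in atTop ×ˢ 𝓝ˢ K,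
      tailIntegral μ p (fun ω => dist (Y z.2 ω) x₀) z.1 ≤ η :=
    hK.mem_prod_nhdsSet_of_forall hlocal
  filter_upwards [hK'.curry] with C hC
  exact fun s hs => hC.self_of_nhdsSet s hs

end UniformTails

theorem MeasureTheory.MeasurePreserving.identDistrib_comp {Ω' β : Type*} [MeasurableSpace Ω']
    [MeasurableSpace β] {μ : Measure Ω} {ν : Measure Ω'} {f : Ω → Ω'}
    (hf : MeasurePreserving f μ ν) {Y : Ω' → β} (hY : Measurable Y) :
    IdentDistrib (Y ∘ f) Y μ ν where
  aemeasurable_fst := (hY.comp hf.measurable).aemeasurable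
  aemeasurable_snd := hY.aemeasurable
  map_eq := by rw [← Measure.map_map hY hf.measurable, hf.map_eq]

theorem RelativelyDense.mono {A B : Set ℝ} (hAB : A ⊆ B) (hA : RelativelyDense A) :
    RelativelyDense B :=
  let ⟨l, hl, hA⟩ := hA
  ⟨l, hl, fun t => let ⟨a, ha, hat⟩ := hA t; ⟨a, hAB ha, hat⟩⟩

def ThetaAlmostPeriodicWith {Ω E : Type*} (d : (Ω → E) → (Ω → E) → ℝ) (θ : ℝ → Ω → Ω)
    (X : ℝ → Ω → E) : Prop :=
  (∀ t s : ℝ, ∀ ε > 0, ∃ δ > 0, ∀ t' s' : ℝ, |t' - t| < δ → |s' - s| < δ →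
      d (fun ω => X (t' + s') (θ (-s') ω)) (fun ω => X (t + s) (θ (-s) ω)) ≤ ε) ∧
  (∀ ε > 0, RelativelyDense {τ : ℝ | ∀ t : ℝ, d (fun ω => X (t + τ) (θ (-τ) ω)) (X t) ≤ ε})

theorem ThetaAlmostPeriodicWith.of_modulus {Ω E : Type*} {θ : ℝ → Ω → Ω} {X : ℝ → Ω → E}
    {d d' : (Ω → E) → (Ω → E) → ℝ} {S : Set (Ω → E)}
    (h : ThetaAlmostPeriodicWith d θ X) (hshift : ∀ t s, (fun ω => X t (θ s ω)) ∈ S)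
    (hX : ∀ t, X t ∈ S) (hmod : ∀ ε > 0, ∃ κ > 0, ∀ Y ∈ S, ∀ Z ∈ S, d Y Z ≤ κ → d' Y Z ≤ ε) :
    ThetaAlmostPeriodicWith d' θ X := by
  obtain ⟨hcont, hper⟩ := h
  refine ⟨fun t s ε hε => ?_, fun ε hε => ?_⟩
  · obtain ⟨κ, hκ, hdd'⟩ := hmod ε hε
    obtain ⟨δ, hδ, hd⟩ := hcont t s κ hκ
    exact ⟨δ, hδ, fun t' s' ht hs => hdd' _ (hshift _ _) _ (hshift _ _) (hd t' s' ht hs)⟩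
  · obtain ⟨κ, hκ, hdd'⟩ := hmod ε hε
    refine (hper κ hκ).mono fun τ hτ t => ?_
    exact hdd' _ (hshift _ _) _ (hX t) (hτ t)

section AlmostPeriodic

variable {μ : Measure Ω} {θ : ℝ → Ω → Ω} {p : ℝ} {X : ℝ → Ω → E}

theorem thetaAlmostPeriodic_iff_with :
    ThetaAlmostPeriodic μ θ X ↔ ThetaAlmostPeriodicWith (d0 μ) θ X :=
  Iff.rfl

theorem thetaAlmostPeriodicP_iff_with :
    ThetaAlmostPeriodicP μ θ p X ↔ ThetaAlmostPeriodicWith (dp μ p) θ X :=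
  Iff.rfl

theorem ThetaAlmostPeriodicP.tendsto_integral_dist_rpow (hX : ThetaAlmostPeriodicP μ θ p X)
    (hθ0 : θ 0 = id) (hp : 0 < p) (s₀ : ℝ) :
    Tendsto (fun s => ∫ ω, dist (X s ω) (X s₀ ω) ^ p ∂μ) (𝓝 s₀) (𝓝 0) := by
  refine tendsto_order.2 ⟨fun a ha => Eventually.of_forall fun s =>
    ha.trans_le (integral_nonneg fun _ => by positivity), fun a ha => ?_⟩
  obtain ⟨δ, hδ, hd⟩ := hX.1 s₀ 0 ((a / 2) ^ p⁻¹) (by positivity)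
  filter_upwards [Metric.ball_mem_nhds s₀ hδ] with s hs
  have := hd s 0 hs (by simpa using hδ)
  simp only [add_zero, neg_zero, hθ0, id] at this
  rw [dp_le_rpow_inv_iff hp (by positivity)] at this
  linarith

theorem ThetaAlmostPeriodicP.exists_tailIntegral_le
    [MeasurableSpace E] [OpensMeasurableSpace E] [SecondCountableTopology E]
    (hX : ThetaAlmostPeriodicP μ θ p X) (hmp : ∀ s, MeasurePreserving (θ s) μ μ)
    (hθ0 : θ 0 = id) (hp : 0 < p) (x₀ : E) (hXm : ∀ t, Measurable (X t))
    (hInt : ∀ t, Integrable (fun ω => dist (X t ω) x₀ ^ p) μ) {ε : ℝ} (hε : 0 < ε) :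
    ∃ C, ∀ t, tailIntegral μ p (fun ω => dist (X t ω) x₀) C ≤ ε := by
  set η := ε / (2 * 2 ^ p) with hη_def
  have hη : 0 < η := by positivity
  obtain ⟨l, hl, hdense⟩ := hX.2 (η ^ p⁻¹) (by positivity)
  obtain ⟨C, hC0, hC⟩ := ((eventually_ge_atTop 0).and (eventually_forall_tailIntegral_le
    (isCompact_Icc (a := 0) (b := l)) hp.le x₀ hXm hInt
    (fun s₀ _ => hX.tendsto_integral_dist_rpow hθ0 hp s₀) hη)).exists
  refine ⟨2 * C, fun t => ?_⟩
  obtain ⟨τ, hτ, hτmem⟩ := hdense (t - l)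
  have hτ' : ∫ ω, dist (X t (θ (-τ) ω)) (X (t - τ) ω) ^ p ∂μ ≤ η := by
    have := hτ (t - τ)
    rwa [sub_add_cancel, dp_le_rpow_inv_iff hp hη.le] at this
  have hshift := ((hmp (-τ)).identDistrib_comp (hXm t)).comp
    (measurable_id'.dist (measurable_const (a := x₀)))
  have hshiftI : Integrable (fun ω => dist (X t (θ (-τ) ω)) x₀ ^ p) μ :=
    (hshift.comp (measurable_id'.pow_const p)).integrable_iff.2 (hInt t)
  calc tailIntegral μ p (fun ω => dist (X t ω) x₀) (2 * C)
      = tailIntegral μ p (fun ω => dist (X t (θ (-τ) ω)) x₀) (2 * C) :=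
        (hshift.tailIntegral_eq _).symm
    _ ≤ 2 ^ p * (∫ ω, dist (X t (θ (-τ) ω)) (X (t - τ) ω) ^ p ∂μ
          + tailIntegral μ p (fun ω => dist (X (t - τ) ω) x₀) C) :=
        tailIntegral_dist_le hp.le x₀ ((hXm t).comp (hmp _).measurable) (hXm _)
          (integrable_dist_rpow hp.le x₀ ((hXm t).comp (hmp _).measurable) (hXm _) hshiftI
            (hInt _)) (hInt _) hC0
    _ ≤ 2 ^ p * (η + η) := by
        gcongr
        exact hC _ ⟨by linarith [hτmem.2], by linarith [hτmem.1]⟩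
    _ = ε := by rw [hη_def]; field_simp; ring

end AlmostPeriodic

theorem thetaAlmostPeriodicP_iff_general
    [PolishSpace E] [MeasurableSpace E] [BorelSpace E]
    (P : Measure Ω) [IsProbabilityMeasure P] (θ : ℝ → Ω → Ω)
    (hmp : ∀ s : ℝ, MeasurePreserving (θ s) P P)
    (hθ0 : θ 0 = id)
    (p : ℝ) (hp : 1 ≤ p) (x₀ : E)
    (X : ℝ → Ω → E) (hXm : ∀ t : ℝ, Measurable (X t))
    (hInt : ∀ t : ℝ, Integrable (fun ω => dist (X t ω) x₀ ^ p) P) :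
    ThetaAlmostPeriodicP P θ p X ↔
      (ThetaAlmostPeriodic P θ X ∧
        ∀ ε > 0, ∃ C : ℝ, ∀ t : ℝ,
          ∫ ω in {ω | C ≤ dist (X t ω) x₀}, dist (X t ω) x₀ ^ p ∂P ≤ ε) := by
  have hp0 : 0 < p := by linarith
  set S : Set (Ω → E) := {Y | Measurable Y ∧ ∃ u, IdentDistrib Y (X u) P P}
  have hshift : ∀ u s, (fun ω => X u (θ s ω)) ∈ S := fun u s =>
    ⟨(hXm u).comp (hmp s).measurable, u, (hmp s).identDistrib_comp (hXm u)⟩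
  have hX : ∀ u, X u ∈ S := fun u => ⟨hXm u, u, IdentDistrib.refl (hXm u).aemeasurable⟩
  have hdist : ∀ Y ∈ S, ∃ u, IdentDistrib (fun ω => dist (Y ω) x₀) (fun ω => dist (X u ω) x₀) P P :=
    fun Y ⟨_, u, h⟩ => ⟨u, h.comp (measurable_id'.dist measurable_const)⟩
  have hSI : ∀ Y ∈ S, Integrable (fun ω => dist (Y ω) x₀ ^ p) P := fun Y hY =>
    let ⟨u, h⟩ := hdist Y hY
    (h.comp (measurable_id'.pow_const p)).integrable_iff.2 (hInt u)
  constructor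
  · intro h
    refine ⟨thetaAlmostPeriodic_iff_with.2 ((thetaAlmostPeriodicP_iff_with.1 h).of_modulus hshift hX
      fun ε hε => ⟨ε, hε, fun Y hY Z hZ hYZ => ?_⟩),
      fun ε hε => h.exists_tailIntegral_le hmp hθ0 hp0 x₀ hXm hInt hε⟩
    exact (d0_le_dp hp (hY.1.dist hZ.1).aemeasurable
      (integrable_dist_rpow hp0.le x₀ hY.1 hZ.1 (hSI Y hY) (hSI Z hZ))).trans hYZ
  · rintro ⟨h, hUI⟩
    refine thetaAlmostPeriodicP_iff_with.2 ((thetaAlmostPeriodic_iff_with.1 h).of_modulus hshift hX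
      fun ε hε => exists_d0_le_imp_dp_le hp0 x₀ (fun Y hY => hY.1) hSI (fun η hη => ?_) hε)
    obtain ⟨C, hC⟩ := hUI η hη
    exact ⟨C, fun Y hY => let ⟨u, h⟩ := hdist Y hY; (h.tailIntegral_eq C).trans_le (hC u)⟩

/-- `X` is `θ`-almost periodic in `p`-mean iff it is `θ`-almost periodic in
probability and the family `dist(X(t,·),x₀)^p`, `t ∈ ℝ`, is uniformly
integrable. -/
theorem thetaAlmostPeriodicP_iff
    [PolishSpace E] [MeasurableSpace E] [BorelSpace E]
    (P : Measure Ω) [IsProbabilityMeasure P] (θ : ℝ → Ω → Ω)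
    (hmp : ∀ s : ℝ, MeasurePreserving (θ s) P P)
    (hθ0 : θ 0 = id) (hθadd : ∀ s t : ℝ, θ (s + t) = θ s ∘ θ t)
    (p : ℝ) (hp : 1 ≤ p) (x₀ : E)
    (X : ℝ → Ω → E) (hXm : ∀ t : ℝ, Measurable (X t))
    (hInt : ∀ t : ℝ, Integrable (fun ω => dist (X t ω) x₀ ^ p) P) :
    ThetaAlmostPeriodicP P θ p X ↔
      (ThetaAlmostPeriodic P θ X ∧
        ∀ ε > 0, ∃ C : ℝ, ∀ t : ℝ,
          ∫ ω in {ω | C ≤ dist (X t ω) x₀}, dist (X t ω) x₀ ^ p ∂P ≤ ε) :=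
  thetaAlmostPeriodicP_iff_general P θ hmp hθ0 p hp x₀ X hXm hInt
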